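/- An optimal solution to P1 with objective ⟨l, c⟩ (c the vector of marginal costs per slot) is obtained greedily: order the slots of the window W by increasing cost c, set l t = p_max on the cheapest slots and l t = −p_max on the most expensive slots as needed to meet the energy constraint; formally, any minimizer l* satisfies: for any two slots s, t ∈ W with c s < c t, l* s ≥ l* t, provided c is injective on W. -/
import Mathlib


/-- Greedy structure of P1 minimizers: if `c` is injective on `W`, then any
minimizer assigns at least as much energy to cheaper slots. -/
theorem stmt_5 (H : ℕ) (hH : 0 < H) (W : Finset (Fin H))
    (c : Fin H → ℝ) (pmax E : ℝ) (hp : 0 ≤ pmax)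
    (hinj : ∀ s ∈ W, ∀ t ∈ W, c s = c t → s = t)
    (lstar : Fin H → ℝ)
    (hfeas : (∑ t ∈ W, lstar t) = E ∧ (∀ t ∈ W, |lstar t| ≤ pmax) ∧
      (∀ t ∉ W, lstar t = 0))
    (hmin : ∀ l : Fin H → ℝ,
      ((∑ t ∈ W, l t) = E ∧ (∀ t ∈ W, |l t| ≤ pmax) ∧
        (∀ t ∉ W, l t = 0)) →
      (∑ t, lstar t * c t) ≤ ∑ t, l t * c t) :
    ∀ s ∈ W, ∀ t ∈ W, c s < c t → lstar t ≤ lstar s := by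
  intro s hs t ht hc
  by_contra hlt
  push_neg at hlt
  have hst : s ≠ t := by rintro rfl; exact lt_irrefl _ hc
  set σ := Equiv.swap s t with hσ
  set l : Fin H → ℝ := fun u => lstar (σ u) with hl
  have hmem : ∀ u : Fin H, u ∈ W ↔ σ u ∈ W := by
    intro u
    rcases eq_or_ne u s with rfl | hus
    · simp [hσ, Equiv.swap_apply_left, hs, ht]
    rcases eq_or_ne u t with rfl | hut
    · simp [hσ, Equiv.swap_apply_right, hs, ht]
    · simp [hσ, Equiv.swap_apply_of_ne_of_ne hus hut]
  obtain ⟨hE, hb, h0⟩ := hfeas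
  have hfl : (∑ u ∈ W, l u) = E ∧ (∀ u ∈ W, |l u| ≤ pmax) ∧
      (∀ u ∉ W, l u = 0) := by
    refine ⟨?_, ?_, ?_⟩
    · rw [← hE]
      exact Finset.sum_equiv σ (fun i => hmem i) (fun i _ => rfl)
    · intro u hu; exact hb _ ((hmem u).mp hu)
    · intro u hu; exact h0 _ (fun h => hu ((hmem u).mpr h))
  have hle := hmin l hfl
  have hdiff : (0:ℝ) ≤ ∑ u, (l u * c u - lstar u * c u) := by
    rw [Finset.sum_sub_distrib]; linarith
  have hsum : ∑ u, (l u * c u - lstar u * c u)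
      = ∑ u ∈ ({s, t} : Finset (Fin H)), (l u * c u - lstar u * c u) := by
    symm
    refine Finset.sum_subset (Finset.subset_univ _) ?_
    intro u _ hu
    simp only [Finset.mem_insert, Finset.mem_singleton, not_or] at hu
    have : σ u = u := Equiv.swap_apply_of_ne_of_ne hu.1 hu.2
    simp [hl, this]
  have hpair : ∑ u ∈ ({s, t} : Finset (Fin H)), (l u * c u - lstar u * c u)
      = (l s * c s - lstar s * c s) + (l t * c t - lstar t * c t) :=
    Finset.sum_pair hst
  have hls : l s = lstar t := by simp [hl, hσ]
  have hlt' : l t = lstar s := by simp [hl, hσ]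
  rw [hsum, hpair, hls, hlt'] at hdiff
  nlinarith [hdiff, hc, hlt]
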